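/- Under the hypotheses of the key inequality (f, g ρ-strongly convex, ∇h L-Lipschitz), with y = prox_{βf}(u), z = prox_{βg}(2y - u + β∇h(y)), and ȳ, x̄ as above, one has ‖2z - 2y + u - ȳ‖² ≤ ‖u - ȳ‖² - 2β(2ρ - L)(‖y - x̄‖² + ‖z - x̄‖²). -/

import Mathlib

open InnerProductSpace Filter

section Defs
variable {H : Type*} [NormedAddCommGroup H] [InnerProductSpace ℝ H] [CompleteSpace H]

def ProperE (f : H → EReal) : Prop := (∀ x, f x ≠ ⊥) ∧ ∃ x, f x ≠ ⊤

def ConvexE (f : H → EReal) : Prop :=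
  ∀ x y : H, ∀ a b : ℝ, 0 ≤ a → 0 ≤ b → a + b = 1 →
    f (a • x + b • y) ≤ (a : EReal) * f x + (b : EReal) * f y

def StrongConvexE (ρ : ℝ) (f : H → EReal) : Prop :=
  ConvexE (fun x => f x - ((ρ / 2 * ‖x‖ ^ 2 : ℝ) : EReal))

def SubdiffE (f : H → EReal) (x : H) : Set H :=
  {u | ∀ z, f x + ((inner ℝ (z - x) u : ℝ) : EReal) ≤ f z}

def IsProx (β : ℝ) (f : H → EReal) (u y : H) : Prop :=
  ∀ v, f y + ((1 / (2 * β) * ‖y - u‖ ^ 2 : ℝ) : EReal)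
      ≤ f v + ((1 / (2 * β) * ‖v - u‖ ^ 2 : ℝ) : EReal)

def StationaryPt (f g : H → EReal) (h' : H → H) (x : H) : Prop :=
  ∃ u ∈ SubdiffE f x, ∃ v ∈ SubdiffE g x, u + v - h' x = 0

def WeakTendsto (x : ℕ → H) (p : H) : Prop :=
  ∀ φ : H →L[ℝ] ℝ, Tendsto (fun n => φ (x n)) atTop (nhds (φ p))

end Defs

/-!
The optimality condition of the proximal point of a `ρ`-strongly convex function makes
`prox_{βf}` strongly monotone: `β ρ ‖y₁ - y₂‖² ≤ ⟪y₁ - y₂, (u₁ - y₁) - (u₂ - y₂)⟫`.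
Apply this to `f` at `u, ȳ` and to `g` at `2y - u + β∇h(y), 2x̄ - ȳ + β∇h(x̄)`, and put
`a = y - x̄`, `b = z - x̄`, `w = u - ȳ`. Expanding `‖2b - 2a + w‖²`, the two inequalities
absorb every cross term except `4β⟪b, ∇h(y) - ∇h(x̄)⟫ ≤ 4βL‖a‖‖b‖ ≤ 2βL(‖a‖² + ‖b‖²)`.
-/

open Topology

lemma le_of_forall_mem_Ioc_le_add_mul {a b c : ℝ} (h : ∀ t ∈ Set.Ioc (0 : ℝ) 1, a ≤ b + t * c) :
    a ≤ b := by
  have hlim : Tendsto (fun t : ℝ => b + t * c) (𝓝[>] 0) (𝓝 b) := by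
    have hcont : Continuous fun t : ℝ => b + t * c := by fun_prop
    simpa using (hcont.tendsto 0).mono_left nhdsWithin_le_nhds
  exact ge_of_tendsto hlim (eventually_of_mem (Ioc_mem_nhdsGT one_pos) h)

section StrongConvexOn
variable {E : Type*} [NormedAddCommGroup E] [InnerProductSpace ℝ E]
  {s : Set E} {φ : E → ℝ} {ρ β : ℝ}

theorem StrongConvexOn.add_inner_le_of_isMinOn {u y v : E} (hφ : StrongConvexOn s ρ φ)
    (hmin : IsMinOn (fun w => φ w + 1 / (2 * β) * ‖w - u‖ ^ 2) s y) (hy : y ∈ s) (hv : v ∈ s) :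
    φ y + β⁻¹ * ⟪u - y, v - y⟫_ℝ + ρ / 2 * ‖v - y‖ ^ 2 ≤ φ v := by
  -- compare `y` with `y + t • (v - y)`, divide by `t` and let `t → 0⁺`
  refine le_of_forall_mem_Ioc_le_add_mul (c := (ρ / 2 + 1 / (2 * β)) * ‖v - y‖ ^ 2)
    fun t ⟨ht₀, ht₁⟩ => le_of_mul_le_mul_left ?_ ht₀
  have hseg : t • v + (1 - t) • y = y + t • (v - y) := by module
  have hconv := hφ.2 hv hy ht₀.le (sub_nonneg.2 ht₁) (add_sub_cancel t 1)
  have hprox := isMinOn_iff.1 hmin _ (hφ.1 hv hy ht₀.le (sub_nonneg.2 ht₁) (add_sub_cancel t 1))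
  rw [hseg, smul_eq_mul, smul_eq_mul] at hconv
  rw [hseg] at hprox
  have hexp : ‖y + t • (v - y) - u‖ ^ 2
      = ‖y - u‖ ^ 2 - 2 * t * ⟪u - y, v - y⟫_ℝ + t ^ 2 * ‖v - y‖ ^ 2 := by
    rw [show y + t • (v - y) - u = t • (v - y) - (u - y) by abel, norm_sub_sq_real, norm_smul,
      real_inner_smul_left, real_inner_comm, norm_sub_rev y u, Real.norm_eq_abs, mul_pow, sq_abs]
    ring
  simp only [hexp] at hprox
  linear_combination hconv + hprox

theorem StrongConvexOn.mul_norm_sub_sq_le_inner_of_isMinOn {u₁ u₂ y₁ y₂ : E}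
    (hφ : StrongConvexOn s ρ φ) (hβ : 0 < β)
    (h₁ : IsMinOn (fun w => φ w + 1 / (2 * β) * ‖w - u₁‖ ^ 2) s y₁)
    (h₂ : IsMinOn (fun w => φ w + 1 / (2 * β) * ‖w - u₂‖ ^ 2) s y₂) (hy₁ : y₁ ∈ s) (hy₂ : y₂ ∈ s) :
    β * ρ * ‖y₁ - y₂‖ ^ 2 ≤ ⟪y₁ - y₂, (u₁ - y₁) - (u₂ - y₂)⟫_ℝ := by
  have hle₁ := hφ.add_inner_le_of_isMinOn h₁ hy₁ hy₂
  have hle₂ := hφ.add_inner_le_of_isMinOn h₂ hy₂ hy₁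
  have hinner : ⟪y₁ - y₂, (u₁ - y₁) - (u₂ - y₂)⟫_ℝ
      = -⟪u₁ - y₁, y₂ - y₁⟫_ℝ - ⟪u₂ - y₂, y₁ - y₂⟫_ℝ := by
    simp only [inner_sub_left, inner_sub_right, real_inner_comm]
    ring
  rw [norm_sub_rev] at hle₁
  rw [mul_assoc, ← le_inv_mul_iff₀ hβ, hinner]
  linear_combination hle₁ + hle₂

end StrongConvexOn

section EReal
variable {H : Type*} {f : H → EReal} {ρ β : ℝ}

lemma ProperE.coe_toReal (hf : ProperE f) {x : H} (hx : f x ≠ ⊤) : ((f x).toReal : EReal) = f x :=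
  EReal.coe_toReal hx (hf.1 x)

variable [NormedAddCommGroup H]

lemma IsProx.ne_top {u y : H} (hf : ProperE f) (hy : IsProx β f u y) : f y ≠ ⊤ := by
  obtain ⟨v, hv⟩ := hf.2
  intro htop
  have hle := hy v
  rw [htop, EReal.top_add_coe, top_le_iff, ← hf.coe_toReal hv, ← EReal.coe_add] at hle
  exact EReal.coe_ne_top _ hle

lemma IsProx.isMinOn_toReal {u y : H} (hf : ProperE f) (hy : IsProx β f u y) :
    IsMinOn (fun v => (f v).toReal + 1 / (2 * β) * ‖v - u‖ ^ 2) {x | f x ≠ ⊤} y := by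
  refine isMinOn_iff.2 fun v hv => ?_
  have hle := hy v
  rwa [← hf.coe_toReal (hy.ne_top hf), ← hf.coe_toReal hv, ← EReal.coe_add, ← EReal.coe_add,
    EReal.coe_le_coe_iff] at hle

variable [InnerProductSpace ℝ H]

lemma StrongConvexE.strongConvexOn_toReal (hf : ProperE f) (hsc : StrongConvexE ρ f) :
    StrongConvexOn {x | f x ≠ ⊤} ρ fun x => (f x).toReal := by
  have hcoe : ∀ ⦃x⦄, f x ≠ ⊤ → ∀ ⦃y⦄, f y ≠ ⊤ → ∀ ⦃a b : ℝ⦄, 0 ≤ a → 0 ≤ b → a + b = 1 →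
      f (a • x + b • y) - ((ρ / 2 * ‖a • x + b • y‖ ^ 2 : ℝ) : EReal)
        ≤ ((a * ((f x).toReal - ρ / 2 * ‖x‖ ^ 2) + b * ((f y).toReal - ρ / 2 * ‖y‖ ^ 2) : ℝ) :
          EReal) := by
    intro x hx y hy a b ha hb hab
    have hle := hsc x y a b ha hb hab
    beta_reduce at hle
    rwa [← hf.coe_toReal hx, ← hf.coe_toReal hy, ← EReal.coe_sub, ← EReal.coe_sub,
      ← EReal.coe_mul, ← EReal.coe_mul, ← EReal.coe_add] at hle
  have hdom : ∀ ⦃x⦄, f x ≠ ⊤ → ∀ ⦃y⦄, f y ≠ ⊤ → ∀ ⦃a b : ℝ⦄, 0 ≤ a → 0 ≤ b → a + b = 1 →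
      f (a • x + b • y) ≠ ⊤ := by
    intro x hx y hy a b ha hb hab htop
    have hle := hcoe hx hy ha hb hab
    rw [htop, EReal.top_sub_coe, top_le_iff] at hle
    exact EReal.coe_ne_top _ hle
  refine strongConvexOn_iff_convex.2 ⟨hdom, fun x hx y hy a b ha hb hab => ?_⟩
  have hle := hcoe hx hy ha hb hab
  rw [← hf.coe_toReal (hdom hx hy ha hb hab), ← EReal.coe_sub, EReal.coe_le_coe_iff] at hle
  simpa only [smul_eq_mul] using hle

lemma IsProx.mul_norm_sub_sq_le_inner {u₁ u₂ y₁ y₂ : H} (hf : ProperE f)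
    (hsc : StrongConvexE ρ f) (hβ : 0 < β) (h₁ : IsProx β f u₁ y₁) (h₂ : IsProx β f u₂ y₂) :
    β * ρ * ‖y₁ - y₂‖ ^ 2 ≤ ⟪y₁ - y₂, (u₁ - y₁) - (u₂ - y₂)⟫_ℝ :=
  (hsc.strongConvexOn_toReal hf).mul_norm_sub_sq_le_inner_of_isMinOn hβ
    (h₁.isMinOn_toReal hf) (h₂.isMinOn_toReal hf) (h₁.ne_top hf) (h₂.ne_top hf)

end EReal

lemma norm_two_smul_sub_two_smul_add_sq_le {E : Type*} [NormedAddCommGroup E]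
    [InnerProductSpace ℝ E] {a b w d : E} {β ρ L : ℝ} (hβ : 0 ≤ β) (hL : 0 ≤ L)
    (ha : β * ρ * ‖a‖ ^ 2 ≤ ⟪a, w - a⟫_ℝ)
    (hb : β * ρ * ‖b‖ ^ 2 ≤ ⟪b, (2 : ℝ) • a - w - b + β • d⟫_ℝ) (hd : ‖d‖ ≤ L * ‖a‖) :
    ‖(2 : ℝ) • b - (2 : ℝ) • a + w‖ ^ 2
      ≤ ‖w‖ ^ 2 - 2 * β * (2 * ρ - L) * (‖a‖ ^ 2 + ‖b‖ ^ 2) := by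
  have hbd : ⟪b, d⟫_ℝ ≤ L * ‖a‖ * ‖b‖ :=
    calc ⟪b, d⟫_ℝ ≤ ‖b‖ * ‖d‖ := real_inner_le_norm b d
      _ ≤ ‖b‖ * (L * ‖a‖) := by gcongr
      _ = L * ‖a‖ * ‖b‖ := by ring
  have hamgm := two_mul_le_add_sq ‖a‖ ‖b‖
  rw [← real_inner_self_eq_norm_sq ((2 : ℝ) • b - (2 : ℝ) • a + w)]
  simp only [inner_add_left, inner_add_right, inner_sub_left, inner_sub_right,
    real_inner_smul_left, real_inner_smul_right, real_inner_self_eq_norm_sq, norm_smul,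
    Real.norm_ofNat, mul_pow] at ha hb ⊢
  linarith [real_inner_comm a b, real_inner_comm a w, real_inner_comm b w,
    mul_le_mul_of_nonneg_left hbd hβ, mul_le_mul_of_nonneg_left hamgm (mul_nonneg hβ hL)]

theorem dr_reflected_estimate_general {H : Type*} [NormedAddCommGroup H] [InnerProductSpace ℝ H]
    (f g : H → EReal) (h' : H → H) (ρ L β : ℝ)
    (hL : 0 < L) (hβ : 0 < β)
    (hfp : ProperE f) (hfsc : StrongConvexE ρ f)
    (hgp : ProperE g) (hgsc : StrongConvexE ρ g)
    (hlip : LipschitzWith (Real.toNNReal L) h')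
    (u y z xbar ybar : H)
    (hy : IsProx β f u y)
    (hz : IsProx β g ((2 : ℝ) • y - u + β • h' y) z)
    (hybar1 : IsProx β f ybar xbar)
    (hybar2 : IsProx β g ((2 : ℝ) • xbar - ybar + β • h' xbar) xbar) :
    ‖(2 : ℝ) • z - (2 : ℝ) • y + u - ybar‖ ^ 2
      ≤ ‖u - ybar‖ ^ 2 - 2 * β * (2 * ρ - L) * (‖y - xbar‖ ^ 2 + ‖z - xbar‖ ^ 2) := by
  have hf := hy.mul_norm_sub_sq_le_inner hfp hfsc hβ hybar1
  have hg := hz.mul_norm_sub_sq_le_inner hgp hgsc hβ hybar2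
  have hd : ‖h' y - h' xbar‖ ≤ L * ‖y - xbar‖ := by
    simpa only [dist_eq_norm, Real.coe_toNNReal L hL.le] using hlip.dist_le_mul y xbar
  have hreflect := norm_two_smul_sub_two_smul_add_sq_le (w := u - ybar) hβ.le hL.le
    (by rwa [show u - y - (ybar - xbar) = u - ybar - (y - xbar) by abel] at hf)
    (by rwa [show (2 : ℝ) • y - u + β • h' y - z - ((2 : ℝ) • xbar - ybar + β • h' xbar - xbar)
      = (2 : ℝ) • (y - xbar) - (u - ybar) - (z - xbar) + β • (h' y - h' xbar) by module] at hg)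
    hd
  convert hreflect using 3
  module

theorem dr_reflected_estimate {H : Type*} [NormedAddCommGroup H] [InnerProductSpace ℝ H] [CompleteSpace H]
    (f g : H → EReal) (h : H → ℝ) (h' : H → H) (ρ L β : ℝ)
    (hρ : 0 < ρ) (hL : 0 < L) (hβ : 0 < β)
    (hfp : ProperE f) (hflsc : LowerSemicontinuous f) (hfsc : StrongConvexE ρ f)
    (hgp : ProperE g) (hglsc : LowerSemicontinuous g) (hgsc : StrongConvexE ρ g)
    (hconv : ConvexOn ℝ Set.univ h)
    (hgrad : ∀ w, HasGradientAt h (h' w) w)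
    (hlip : LipschitzWith (Real.toNNReal L) h')
    (u y z xbar ybar : H)
    (hxbar : StationaryPt f g h' xbar)
    (hy : IsProx β f u y)
    (hz : IsProx β g ((2 : ℝ) • y - u + β • h' y) z)
    (hybar1 : IsProx β f ybar xbar)
    (hybar2 : IsProx β g ((2 : ℝ) • xbar - ybar + β • h' xbar) xbar) :
    ‖(2 : ℝ) • z - (2 : ℝ) • y + u - ybar‖ ^ 2
      ≤ ‖u - ybar‖ ^ 2 - 2 * β * (2 * ρ - L) * (‖y - xbar‖ ^ 2 + ‖z - xbar‖ ^ 2) :=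
  dr_reflected_estimate_general f g h' ρ L β hL hβ hfp hfsc hgp hgsc hlip u y z xbar ybar hy hz
    hybar1 hybar2
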